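/- In ℤ_2, the set of values of the binary quadratic form Q(x,y) = 2x^2 + 2xy + 2y^2 equals {0} ∪ {w ∈ ℤ_2 : v_2(w) is odd}, where v_2 denotes the 2-adic valuation. -/

import Mathlib

/-!
The form is `2 (x² + xy + y²)`, and `x² + xy + y²` is anisotropic mod 2 (`t² + t + 1` has no
root in `𝔽₂`). As `ℤ₂` is a valuation ring we may assume `x ∣ y`, say `y = x t`; then the value
is `2 x² (1 + t + t²)` with `1 + t + t²` a unit, so its valuation is `2 v(x) + 1`. Conversely the
derivative `2t + 1` of `t² + t + 1` is a unit, so by Hensel's lemma `1 + t + t²` takes every unit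
value `u`, and `2^(2k+1) u` is the value at `(2^k, 2^k t)`.
-/

namespace PadicInt

section Prime

variable {p : ℕ} [Fact p.Prime]

theorem isUnit_iff_toZMod_ne_zero {z : ℤ_[p]} : IsUnit z ↔ toZMod z ≠ 0 := by
  rw [Ne, ← RingHom.mem_ker, ker_toZMod, IsLocalRing.mem_maximalIdeal, mem_nonunits_iff,
    not_not]

theorem valuation_eq_zero_of_isUnit {u : ℤ_[p]} (hu : IsUnit u) : u.valuation = 0 := by
  obtain ⟨v, huv⟩ := hu.exists_right_inv
  have h := valuation_mul hu.ne_zero (right_ne_zero_of_mul_eq_one huv)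
  rw [huv, valuation_one] at h
  omega

end Prime

theorem valuation_two : (2 : ℤ_[2]).valuation = 1 := by
  simpa using valuation_p (p := 2)

theorem isUnit_one_add_add_sq (t : ℤ_[2]) : IsUnit (1 + t + t ^ 2) := by
  rw [isUnit_iff_toZMod_ne_zero, map_add, map_add, map_one, map_pow]
  generalize toZMod t = T
  revert T
  decide

theorem exists_one_add_add_sq_eq {u : ℤ_[2]} (hu : IsUnit u) :
    ∃ t : ℤ_[2], 1 + t + t ^ 2 = u := by
  set F : Polynomial ℤ_[2] := .X ^ 2 + .X + .C (1 - u)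
  have hF : ‖F.aeval (0 : ℤ_[2])‖ < ‖F.derivative.aeval (0 : ℤ_[2])‖ ^ 2 := by
    have hF₀ : F.aeval (0 : ℤ_[2]) = 1 - u := by simp [F]
    have hF'₀ : F.derivative.aeval (0 : ℤ_[2]) = 1 := by simp [F]
    rw [hF₀, hF'₀, norm_one, one_pow, ← not_isUnit_iff, isUnit_iff_toZMod_ne_zero, map_sub,
      map_one, not_not]
    rw [isUnit_iff_toZMod_ne_zero] at hu
    revert hu
    generalize toZMod u = U
    revert U
    decide
  obtain ⟨t, ht, -⟩ := hensels_lemma hF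
  refine ⟨t, ?_⟩
  have ht' : t ^ 2 + t + (1 - u) = 0 := by simpa [F] using ht
  linear_combination ht'

theorem valuation_form_mul_right {x : ℤ_[2]} (hx : x ≠ 0) (t : ℤ_[2]) :
    (2 * x ^ 2 + 2 * x * (x * t) + 2 * (x * t) ^ 2).valuation = 2 * x.valuation + 1 := by
  have hunit := isUnit_one_add_add_sq t
  rw [show 2 * x ^ 2 + 2 * x * (x * t) + 2 * (x * t) ^ 2 = 2 * x ^ 2 * (1 + t + t ^ 2) by ring,
    valuation_mul (mul_ne_zero two_ne_zero (pow_ne_zero 2 hx)) hunit.ne_zero,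
    valuation_mul two_ne_zero (pow_ne_zero 2 hx), valuation_pow, valuation_two,
    valuation_eq_zero_of_isUnit hunit]
  ring

theorem form_eq_zero_or_odd_valuation_of_dvd {x y : ℤ_[2]} (hxy : x ∣ y) :
    2 * x ^ 2 + 2 * x * y + 2 * y ^ 2 = 0 ∨
      Odd (2 * x ^ 2 + 2 * x * y + 2 * y ^ 2).valuation := by
  obtain ⟨t, rfl⟩ := hxy
  rcases eq_or_ne x 0 with rfl | hx
  · left
    ring
  · right
    rw [valuation_form_mul_right hx t]
    exact odd_two_mul_add_one _

theorem exists_form_eq_of_odd_valuation {w : ℤ_[2]} (hw : Odd w.valuation) :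
    ∃ x y : ℤ_[2], w = 2 * x ^ 2 + 2 * x * y + 2 * y ^ 2 := by
  have hw₀ : w ≠ 0 := by
    rintro rfl
    simp at hw
  obtain ⟨k, hk⟩ := hw
  obtain ⟨t, ht⟩ := exists_one_add_add_sq_eq (unitCoeff hw₀).isUnit
  refine ⟨2 ^ k, 2 ^ k * t, ?_⟩
  rw [unitCoeff_spec hw₀, hk, ← ht]
  push_cast
  ring

end PadicInt

open PadicInt

theorem aniso_values :
    {w : ℤ_[2] | ∃ x y : ℤ_[2], w = 2 * x ^ 2 + 2 * x * y + 2 * y ^ 2}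
      = {0} ∪ {w : ℤ_[2] | Odd w.valuation} := by
  ext w
  simp only [Set.mem_ofPred_eq, Set.mem_union, Set.mem_singleton_iff]
  constructor
  · rintro ⟨x, y, rfl⟩
    rcases ValuationRing.dvd_total x y with hxy | hyx
    · exact form_eq_zero_or_odd_valuation_of_dvd hxy
    · rw [show 2 * x ^ 2 + 2 * x * y + 2 * y ^ 2 = 2 * y ^ 2 + 2 * y * x + 2 * x ^ 2 by ring]
      exact form_eq_zero_or_odd_valuation_of_dvd hyx
  · rintro (rfl | hw)
    · exact ⟨0, 0, by ring⟩
    · exact exists_form_eq_of_odd_valuation hw
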